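/- arXiv:1502.02770 — 2 statements merged into one kernel-verified Lean document; each statement's English description precedes it below -/
import Mathlib

section
/- Let V = (⊕_{i∈ℤ} ℂL_i) ⊕ (⊕_{i∈ℤ} ℂH_i) be the Novikov algebra with product L_i∘L_j = L_{i+j}, L_i∘H_j = 0, H_j∘L_i = H_{i+j}, H_i∘H_j = 0 (trivial Lie bracket). Then bilinear forms α_0, α_1, α_2, α_3 : V×V → ℂ satisfy the identities (N1)–(N5) if and only if there exist functions f, g, h, k, l : ℤ → ℂ such that for all i, j ∈ ℤ: α_3(L_i, L_j) = f(i+j); α_1(L_i, L_j) = g(i+j); α_1(L_i, H_j) = α_1(H_j, L_i) = h(i+j); α_2(L_i, H_j) = −α_2(H_j, L_i) = k(i+j); α_1(H_i, H_j) = l(i+j); and α_0 = 0, α_3(L_i, H_j) = α_3(H_j, L_i) = α_3(H_i, H_j) = 0, α_2(L_i, L_j) = α_2(H_i, H_j) = 0. -/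
/-- Structure constants of the Novikov algebra
`V = (⊕_{i∈ℤ} ℂL_i) ⊕ (⊕_{i∈ℤ} ℂH_i)` on basis indices
(`Sum.inl i ↦ L_i`, `Sum.inr i ↦ H_i`):
`L_i∘L_j = L_{i+j}`, `L_i∘H_j = 0`, `H_i∘L_j = H_{i+j}`, `H_i∘H_j = 0`. -/
noncomputable def chvBase : ℤ ⊕ ℤ → ℤ ⊕ ℤ → ((ℤ ⊕ ℤ) →₀ ℂ)
  | Sum.inl i, Sum.inl j => Finsupp.single (Sum.inl (i + j)) 1
  | Sum.inl _, Sum.inr _ => 0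
  | Sum.inr i, Sum.inl j => Finsupp.single (Sum.inr (i + j)) 1
  | Sum.inr _, Sum.inr _ => 0

/-- The Novikov product on `V = (⊕_{i∈ℤ} ℂL_i) ⊕ (⊕_{i∈ℤ} ℂH_i)`
(realized as `(ℤ ⊕ ℤ) →₀ ℂ`). -/
noncomputable def circCHV (u v : (ℤ ⊕ ℤ) →₀ ℂ) : (ℤ ⊕ ℤ) →₀ ℂ :=
  u.sum fun p x => v.sum fun q y => (x * y) • chvBase p q

/-- The basis vector `L_i`. -/
noncomputable def LCHV (i : ℤ) : (ℤ ⊕ ℤ) →₀ ℂ := Finsupp.single (Sum.inl i) 1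

/-- The basis vector `H_i`. -/
noncomputable def HCHV (i : ℤ) : (ℤ ⊕ ℤ) →₀ ℂ := Finsupp.single (Sum.inr i) 1

/-!
Identify `V` with `A L ⊕ A H` for the Laurent polynomial ring `A = ℂ[t, t⁻¹]`, where
`L_i = tⁱ L` and `H_i = tⁱ H`; the product becomes `(p L + q H) ∘ (p' L + q' H) = p p' L + q p' H`.
Specialising the identities to basis vectors, mostly with one argument equal to `L_0` (the unit
of `A`), shows that every basis value depends only on the total degree and that `α_0` vanishes.
Conversely, the forms listed are `(a, b) ↦ φ(x y)` for linear functionals `φ` on `A` and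
components `x` of `a`, `y` of `b`, and for such forms the identities (N1)–(N4) are consequences
of the commutativity and associativity of `A`.
-/

open LaurentPolynomial

local notation "V" => (ℤ ⊕ ℤ) →₀ ℂ

lemma circCHV_single (p q : ℤ ⊕ ℤ) :
    circCHV (Finsupp.single p 1) (Finsupp.single q 1) = chvBase p q := by
  simp [circCHV]

@[simp] lemma circCHV_L_L (i j : ℤ) : circCHV (LCHV i) (LCHV j) = LCHV (i + j) := circCHV_single _ _
@[simp] lemma circCHV_L_H (i j : ℤ) : circCHV (LCHV i) (HCHV j) = 0 := circCHV_single _ _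
@[simp] lemma circCHV_H_L (i j : ℤ) : circCHV (HCHV i) (LCHV j) = HCHV (i + j) := circCHV_single _ _
@[simp] lemma circCHV_H_H (i j : ℤ) : circCHV (HCHV i) (HCHV j) = 0 := circCHV_single _ _

lemma ext_LCHV_HCHV {M : Type*} [AddCommMonoid M] [Module ℂ M] {B B' : V →ₗ[ℂ] V →ₗ[ℂ] M}
    (hLL : ∀ i j, B (LCHV i) (LCHV j) = B' (LCHV i) (LCHV j))
    (hLH : ∀ i j, B (LCHV i) (HCHV j) = B' (LCHV i) (HCHV j))
    (hHL : ∀ i j, B (HCHV i) (LCHV j) = B' (HCHV i) (LCHV j))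
    (hHH : ∀ i j, B (HCHV i) (HCHV j) = B' (HCHV i) (HCHV j)) :
    B = B' := by
  refine LinearMap.ext_basis Finsupp.basisSingleOne Finsupp.basisSingleOne ?_
  rintro (i | i) (j | j)
  exacts [hLL i j, hLH i j, hHL i j, hHH i j]

lemma eq_zero_of_skew_of_N5 {β : V →ₗ[ℂ] V →ₗ[ℂ] ℂ} (hskew : ∀ a b, β a b = -β b a)
    (hN5 : ∀ a b c, β (circCHV c a) b - β (circCHV c b) a = β (circCHV a b) c - β (circCHV a c) b) :
    ∀ a b, β a b = 0 := by
  have hLH : ∀ i j, β (LCHV i) (HCHV j) = 0 := fun i j => by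
    have h := hN5 (LCHV i) (HCHV j) (LCHV 0)
    simp only [circCHV_L_L, circCHV_L_H, zero_add, add_zero, map_zero, LinearMap.zero_apply] at h
    linear_combination h / 2
  suffices β = 0 by simp [this]
  apply ext_LCHV_HCHV <;> intro i j <;> simp only [LinearMap.zero_apply]
  · have hA := hN5 (LCHV 0) (LCHV j) (LCHV i)
    have hB := hN5 (LCHV j) (LCHV 0) (LCHV i)
    simp only [circCHV_L_L, zero_add, add_zero, add_comm j i] at hA hB
    linear_combination hA / 3 + hB / 6 + hskew (LCHV j) (LCHV i) / 2
  · exact hLH i j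
  · rw [hskew, hLH, neg_zero]
  · simpa using hN5 (HCHV i) (HCHV j) (LCHV 0)

lemma alpha3_basis_of_N2 {α3 : V →ₗ[ℂ] V →ₗ[ℂ] ℂ} (hsymm : ∀ a b, α3 a b = α3 b a)
    (hN2 : ∀ a b c, α3 a (circCHV c b) = α3 (circCHV a b) c
      ∧ α3 (circCHV a b) c = α3 (circCHV b a) c) (i j : ℤ) :
    α3 (LCHV i) (LCHV j) = α3 (LCHV (i + j)) (LCHV 0) ∧ α3 (LCHV i) (HCHV j) = 0
      ∧ α3 (HCHV j) (LCHV i) = 0 ∧ α3 (HCHV i) (HCHV j) = 0 := by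
  have hH : ∀ n c, α3 (HCHV n) c = 0 := fun n c => by
    simpa using ((hN2 (LCHV 0) (HCHV n) c).2).symm
  exact ⟨by simpa using (hN2 (LCHV i) (LCHV j) (LCHV 0)).1, by rw [hsymm, hH], hH j _, hH i _⟩

lemma alpha1_basis_of_N4 {α1 : V →ₗ[ℂ] V →ₗ[ℂ] ℂ} (hsymm : ∀ a b, α1 a b = α1 b a)
    (hN4 : ∀ a b c, α1 a (circCHV c b) = α1 (circCHV a b) c) (i j : ℤ) :
    α1 (LCHV i) (LCHV j) = α1 (LCHV (i + j)) (LCHV 0)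
      ∧ α1 (LCHV i) (HCHV j) = α1 (LCHV (i + j)) (HCHV 0)
      ∧ α1 (HCHV j) (LCHV i) = α1 (LCHV (i + j)) (HCHV 0)
      ∧ α1 (HCHV i) (HCHV j) = α1 (HCHV (i + j)) (HCHV 0) := by
  have hLH : α1 (LCHV i) (HCHV j) = α1 (LCHV (i + j)) (HCHV 0) := by
    simpa using hN4 (LCHV i) (LCHV j) (HCHV 0)
  exact ⟨by simpa using hN4 (LCHV i) (LCHV j) (LCHV 0), hLH, by rw [hsymm, hLH],
    by simpa using hN4 (HCHV i) (LCHV j) (HCHV 0)⟩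

lemma alpha2_basis_of_N3 {α2 : V →ₗ[ℂ] V →ₗ[ℂ] ℂ} (hskew : ∀ a b, α2 a b = -α2 b a)
    (hN3 : ∀ a b c, α2 a (circCHV b c) + α2 (circCHV b a) c = α2 (circCHV a b) c
      ∧ α2 (circCHV a b) c = α2 a (circCHV c b)) (i j : ℤ) :
    α2 (LCHV i) (HCHV j) = α2 (LCHV (i + j)) (HCHV 0)
      ∧ α2 (HCHV j) (LCHV i) = -α2 (LCHV (i + j)) (HCHV 0)
      ∧ α2 (LCHV i) (LCHV j) = 0 ∧ α2 (HCHV i) (HCHV j) = 0 := by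
  have hLH : α2 (LCHV i) (HCHV j) = α2 (LCHV (i + j)) (HCHV 0) := by
    simpa using ((hN3 (LCHV i) (LCHV j) (HCHV 0)).2).symm
  refine ⟨hLH, by rw [hskew, hLH], ?_, by simpa using ((hN3 (HCHV i) (LCHV 0) (HCHV j)).1).symm⟩
  have h := (hN3 (LCHV i) (LCHV 0) (LCHV j)).1
  simp only [circCHV_L_L, zero_add, add_zero] at h
  linear_combination h

noncomputable def lcircCHV : V →ₗ[ℂ] V →ₗ[ℂ] V :=
  Finsupp.basisSingleOne.constr ℂ fun p => Finsupp.basisSingleOne.constr ℂ fun q => chvBase p q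

lemma lcircCHV_apply (u v : V) : lcircCHV u v = circCHV u v := by
  simp [lcircCHV, circCHV, Module.Basis.constr_apply, Finsupp.smul_sum, mul_smul]

noncomputable def lComponent : V →ₗ[ℂ] ℂ[T;T⁻¹] :=
  Finsupp.lsum ℂ (Sum.elim AddMonoidAlgebra.lsingle 0)

noncomputable def hComponent : V →ₗ[ℂ] ℂ[T;T⁻¹] :=
  Finsupp.lsum ℂ (Sum.elim 0 AddMonoidAlgebra.lsingle)

@[simp] lemma lComponent_L (i : ℤ) : lComponent (LCHV i) = T i := by
  simp only [lComponent, LCHV, Finsupp.lsum_single]; rfl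
@[simp] lemma lComponent_H (i : ℤ) : lComponent (HCHV i) = 0 := by
  simp only [lComponent, HCHV, Finsupp.lsum_single]; rfl
@[simp] lemma hComponent_L (i : ℤ) : hComponent (LCHV i) = 0 := by
  simp only [hComponent, LCHV, Finsupp.lsum_single]; rfl
@[simp] lemma hComponent_H (i : ℤ) : hComponent (HCHV i) = T i := by
  simp only [hComponent, HCHV, Finsupp.lsum_single]; rfl

lemma lComponent_circCHV (u v : V) :
    lComponent (circCHV u v) = lComponent u * lComponent v := by
  have : lcircCHV.compr₂ lComponent =
      (LinearMap.mul ℂ ℂ[T;T⁻¹]).compl₁₂ lComponent lComponent := by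
    -- the simp lemma `T_mul : T n * f = f * T n` loops on products of monomials
    apply ext_LCHV_HCHV <;> simp [lcircCHV_apply, ← T_add, -T_mul]
  simpa [lcircCHV_apply] using congr($this u v)

lemma hComponent_circCHV (u v : V) :
    hComponent (circCHV u v) = hComponent u * lComponent v := by
  have : lcircCHV.compr₂ hComponent =
      (LinearMap.mul ℂ ℂ[T;T⁻¹]).compl₁₂ hComponent lComponent := by
    apply ext_LCHV_HCHV <;> simp [lcircCHV_apply, ← T_add, -T_mul]
  simpa [lcircCHV_apply] using congr($this u v)

noncomputable def coeffFunctional (f : ℤ → ℂ) : ℂ[T;T⁻¹] →ₗ[ℂ] ℂ :=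
  (AddMonoidAlgebra.basis ℤ ℂ).constr ℂ f

@[simp] lemma coeffFunctional_T (f : ℤ → ℂ) (n : ℤ) : coeffFunctional f (T n) = f n :=
  (AddMonoidAlgebra.basis ℤ ℂ).constr_basis ℂ f n

noncomputable def mulForm (f : ℤ → ℂ) (P Q : V →ₗ[ℂ] ℂ[T;T⁻¹]) : V →ₗ[ℂ] V →ₗ[ℂ] ℂ :=
  ((LinearMap.mul ℂ ℂ[T;T⁻¹]).compl₁₂ P Q).compr₂ (coeffFunctional f)

@[simp] lemma mulForm_apply (f : ℤ → ℂ) (P Q : V →ₗ[ℂ] ℂ[T;T⁻¹]) (a b : V) :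
    mulForm f P Q a b = coeffFunctional f (P a * Q b) := rfl

noncomputable def alpha3Form (f : ℤ → ℂ) : V →ₗ[ℂ] V →ₗ[ℂ] ℂ :=
  mulForm f lComponent lComponent

noncomputable def alpha1Form (g h l : ℤ → ℂ) : V →ₗ[ℂ] V →ₗ[ℂ] ℂ :=
  mulForm g lComponent lComponent + mulForm h lComponent hComponent
    + mulForm h hComponent lComponent + mulForm l hComponent hComponent

noncomputable def alpha2Form (k : ℤ → ℂ) : V →ₗ[ℂ] V →ₗ[ℂ] ℂ :=
  mulForm k lComponent hComponent - mulForm k hComponent lComponent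

lemma alpha3Form_symm (f : ℤ → ℂ) (a b : V) : alpha3Form f a b = alpha3Form f b a := by
  simp only [alpha3Form, mulForm_apply, mul_comm]

lemma alpha3Form_N2 (f : ℤ → ℂ) (a b c : V) :
    alpha3Form f a (circCHV c b) = alpha3Form f (circCHV a b) c
      ∧ alpha3Form f (circCHV a b) c = alpha3Form f (circCHV b a) c := by
  simp only [alpha3Form, mulForm_apply, lComponent_circCHV]
  constructor <;> ring_nf

lemma alpha1Form_symm (g h l : ℤ → ℂ) (a b : V) :
    alpha1Form g h l a b = alpha1Form g h l b a := by
  simp only [alpha1Form, LinearMap.add_apply, mulForm_apply]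
  ring_nf

lemma alpha1Form_N4 (g h l : ℤ → ℂ) (a b c : V) :
    alpha1Form g h l a (circCHV c b) = alpha1Form g h l (circCHV a b) c := by
  simp only [alpha1Form, LinearMap.add_apply, mulForm_apply, lComponent_circCHV,
    hComponent_circCHV]
  ring_nf

lemma alpha2Form_skew (k : ℤ → ℂ) (a b : V) : alpha2Form k a b = -alpha2Form k b a := by
  simp only [alpha2Form, LinearMap.sub_apply, mulForm_apply]
  ring_nf

lemma alpha2Form_N3 (k : ℤ → ℂ) (a b c : V) :
    alpha2Form k a (circCHV b c) + alpha2Form k (circCHV b a) c = alpha2Form k (circCHV a b) c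
      ∧ alpha2Form k (circCHV a b) c = alpha2Form k a (circCHV c b) := by
  simp only [alpha2Form, LinearMap.sub_apply, mulForm_apply, lComponent_circCHV,
    hComponent_circCHV]
  constructor <;> ring_nf

lemma eq_alpha3Form {α3 : V →ₗ[ℂ] V →ₗ[ℂ] ℂ} {f : ℤ → ℂ}
    (hLL : ∀ i j, α3 (LCHV i) (LCHV j) = f (i + j)) (hLH : ∀ i j, α3 (LCHV i) (HCHV j) = 0)
    (hHL : ∀ i j, α3 (HCHV j) (LCHV i) = 0) (hHH : ∀ i j, α3 (HCHV i) (HCHV j) = 0) :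
    α3 = alpha3Form f := by
  apply ext_LCHV_HCHV <;> intro i j <;> simp [alpha3Form, ← T_add, -T_mul, hLL, hLH, hHL, hHH]

lemma eq_alpha1Form {α1 : V →ₗ[ℂ] V →ₗ[ℂ] ℂ} {g h l : ℤ → ℂ}
    (hLL : ∀ i j, α1 (LCHV i) (LCHV j) = g (i + j))
    (hLH : ∀ i j, α1 (LCHV i) (HCHV j) = h (i + j))
    (hHL : ∀ i j, α1 (HCHV j) (LCHV i) = h (i + j))
    (hHH : ∀ i j, α1 (HCHV i) (HCHV j) = l (i + j)) :
    α1 = alpha1Form g h l := by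
  apply ext_LCHV_HCHV <;> intro i j <;>
    simp [alpha1Form, ← T_add, -T_mul, hLL, hLH, hHL, hHH, add_comm]

lemma eq_alpha2Form {α2 : V →ₗ[ℂ] V →ₗ[ℂ] ℂ} {k : ℤ → ℂ}
    (hLL : ∀ i j, α2 (LCHV i) (LCHV j) = 0) (hLH : ∀ i j, α2 (LCHV i) (HCHV j) = k (i + j))
    (hHL : ∀ i j, α2 (HCHV j) (LCHV i) = -k (i + j)) (hHH : ∀ i j, α2 (HCHV i) (HCHV j) = 0) :
    α2 = alpha2Form k := by
  apply ext_LCHV_HCHV <;> intro i j <;>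
    simp [alpha2Form, ← T_add, -T_mul, hLL, hLH, hHL, hHH, add_comm]

/-- For the Novikov algebra
`V = (⊕_{i∈ℤ} ℂL_i) ⊕ (⊕_{i∈ℤ} ℂH_i)` with `L_i∘L_j = L_{i+j}`, `L_i∘H_j = 0`,
`H_j∘L_i = H_{i+j}`, `H_i∘H_j = 0` (trivial Lie bracket): bilinear forms
`α_0, α_1, α_2, α_3` satisfy (N1)–(N5) if and only if there are functions
`f, g, h, k, l : ℤ → ℂ` realizing the values listed in the statement and all the
remaining basis values (and all of `α_0`) vanish. -/
theorem stmt_17 (α0 α1 α2 α3 : ((ℤ ⊕ ℤ) →₀ ℂ) →ₗ[ℂ] ((ℤ ⊕ ℤ) →₀ ℂ) →ₗ[ℂ] ℂ) :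
    -- the identities (N1)–(N5) ...
    ((∀ a b : (ℤ ⊕ ℤ) →₀ ℂ, α0 a b = - α0 b a)
      ∧ (∀ a b : (ℤ ⊕ ℤ) →₀ ℂ, α1 a b = α1 b a)
      ∧ (∀ a b : (ℤ ⊕ ℤ) →₀ ℂ, α2 a b = - α2 b a)
      ∧ (∀ a b : (ℤ ⊕ ℤ) →₀ ℂ, α3 a b = α3 b a)
      -- (N2)
      ∧ (∀ a b c : (ℤ ⊕ ℤ) →₀ ℂ, α3 a (circCHV c b) = α3 (circCHV a b) c
          ∧ α3 (circCHV a b) c = α3 (circCHV b a) c)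
      -- (N3)
      ∧ (∀ a b c : (ℤ ⊕ ℤ) →₀ ℂ, α2 a (circCHV b c) + α2 (circCHV b a) c = α2 (circCHV a b) c
          ∧ α2 (circCHV a b) c = α2 a (circCHV c b))
      -- (N4)
      ∧ (∀ a b c : (ℤ ⊕ ℤ) →₀ ℂ, α1 a (circCHV c b) = α1 (circCHV a b) c)
      -- (N5)
      ∧ (∀ a b c : (ℤ ⊕ ℤ) →₀ ℂ, α0 (circCHV c a) b - α0 (circCHV c b) a
          = α0 (circCHV a b) c - α0 (circCHV a c) b))
    -- ... hold if and only if: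
    ↔ (∃ f g h k l : ℤ → ℂ,
        (∀ a b : (ℤ ⊕ ℤ) →₀ ℂ, α0 a b = 0)
          ∧ ∀ i j : ℤ,
              α3 (LCHV i) (LCHV j) = f (i + j)
                ∧ α1 (LCHV i) (LCHV j) = g (i + j)
                ∧ α1 (LCHV i) (HCHV j) = h (i + j)
                ∧ α1 (HCHV j) (LCHV i) = h (i + j)
                ∧ α2 (LCHV i) (HCHV j) = k (i + j)
                ∧ α2 (HCHV j) (LCHV i) = -k (i + j)
                ∧ α1 (HCHV i) (HCHV j) = l (i + j)
                ∧ α3 (LCHV i) (HCHV j) = 0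
                ∧ α3 (HCHV j) (LCHV i) = 0
                ∧ α3 (HCHV i) (HCHV j) = 0
                ∧ α2 (LCHV i) (LCHV j) = 0
                ∧ α2 (HCHV i) (HCHV j) = 0) := by
  constructor
  · rintro ⟨h0, h1, h2, h3, hN2, hN3, hN4, hN5⟩
    refine ⟨fun n => α3 (LCHV n) (LCHV 0), fun n => α1 (LCHV n) (LCHV 0),
      fun n => α1 (LCHV n) (HCHV 0), fun n => α2 (LCHV n) (HCHV 0),
      fun n => α1 (HCHV n) (HCHV 0), eq_zero_of_skew_of_N5 h0 hN5, fun i j => ?_⟩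
    obtain ⟨e3LL, e3LH, e3HL, e3HH⟩ := alpha3_basis_of_N2 h3 hN2 i j
    obtain ⟨e1LL, e1LH, e1HL, e1HH⟩ := alpha1_basis_of_N4 h1 hN4 i j
    obtain ⟨e2LH, e2HL, e2LL, e2HH⟩ := alpha2_basis_of_N3 h2 hN3 i j
    exact ⟨e3LL, e1LL, e1LH, e1HL, e2LH, e2HL, e1HH, e3LH, e3HL, e3HH, e2LL, e2HH⟩
  · rintro ⟨f, g, h, k, l, h0, hv⟩
    simp only [forall_and] at hv
    obtain ⟨e3LL, e1LL, e1LH, e1HL, e2LH, e2HL, e1HH, e3LH, e3HL, e3HH, e2LL, e2HH⟩ := hv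
    obtain rfl := eq_alpha3Form e3LL e3LH e3HL e3HH
    obtain rfl := eq_alpha1Form e1LL e1LH e1HL e1HH
    obtain rfl := eq_alpha2Form e2LL e2LH e2HL e2HH
    exact ⟨by simp [h0], alpha1Form_symm g h l, alpha2Form_skew k, alpha3Form_symm f,
      alpha3Form_N2 f, alpha2Form_N3 k, alpha1Form_N4 g h l, by simp [h0]⟩
end

section
/- Let V = ⊕_{i∈ℤ} ℂL_i be the Novikov algebra with product L_i∘L_j = −L_{i+j}, and write u∗v = u∘v + v∘u. (a) If T : V → V is a ℂ-linear map satisfying T(u∘v) = T(u)∘v and T(u)∗v = T(v)∗u for all u, v ∈ V, then there exists a finitely supported function k : ℤ → ℂ such that T(L_j) = Σ_{c∈ℤ} k(c)·L_{j+c} for all j ∈ ℤ. (b) If P : V → V is a ℂ-linear map satisfying P(u∘v) = P(u)∘v + u∘P(v) and P(u)∘v = P(v)∘u for all u, v ∈ V, then P = 0. -/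
/-- The Novikov product on `V = ⊕_{i∈ℤ} ℂL_i` (realized as `ℤ →₀ ℂ`) determined by
`L_i ∘ L_j = −L_{i+j}`. -/
noncomputable def circLW (u v : ℤ →₀ ℂ) : ℤ →₀ ℂ :=
  u.sum fun i x => v.sum fun j y => Finsupp.single (i + j) (-(x * y))

/-- The basis vector `L_i`. -/
noncomputable def LV (i : ℤ) : ℤ →₀ ℂ := Finsupp.single i 1

lemma circ_right (u : ℤ →₀ ℂ) (j : ℤ) :
    circLW u (LV j) = u.sum fun i x => Finsupp.single (i + j) (-x) := by
  unfold circLW LV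
  refine Finsupp.sum_congr fun i _ => ?_
  rw [Finsupp.sum_single_index] <;> simp

lemma circ_left (v : ℤ →₀ ℂ) (i : ℤ) :
    circLW (LV i) v = v.sum fun j y => Finsupp.single (i + j) (-y) := by
  unfold circLW LV
  rw [Finsupp.sum_single_index] <;> simp [Finsupp.sum]

lemma neg_sum_single (g : ℤ →₀ ℂ) :
    (g.sum fun i x => Finsupp.single i (-x)) = -g := by
  simp only [Finsupp.single_neg, Finsupp.sum, Finset.sum_neg_distrib]
  conv_rhs => rw [← Finsupp.sum_single g]
  rfl

lemma circ_LV_zero_right (g : ℤ →₀ ℂ) : circLW g (LV 0) = -g := by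
  rw [circ_right]; simpa using neg_sum_single g

lemma circ_LV_zero_left (g : ℤ →₀ ℂ) : circLW (LV 0) g = -g := by
  rw [circ_left]; simpa using neg_sum_single g

/-- Let `V = ⊕_{i∈ℤ} ℂL_i` be the Novikov algebra with
`L_i∘L_j = −L_{i+j}`, and write `u∗v = u∘v + v∘u`.
(a) If `T : V → V` is a `ℂ`-linear map with `T(u∘v) = T(u)∘v` and
`T(u)∗v = T(v)∗u` for all `u, v`, then there is a finitely supported `k : ℤ → ℂ`
with `T(L_j) = Σ_c k(c)·L_{j+c}` for all `j`.
(b) If `P : V → V` is a `ℂ`-linear map with `P(u∘v) = P(u)∘v + u∘P(v)` and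
`P(u)∘v = P(v)∘u` for all `u, v`, then `P = 0`. -/
theorem stmt_18 :
    -- (a)
    (∀ T : (ℤ →₀ ℂ) →ₗ[ℂ] (ℤ →₀ ℂ),
      (∀ u v : ℤ →₀ ℂ, T (circLW u v) = circLW (T u) v) →
      (∀ u v : ℤ →₀ ℂ,
        circLW (T u) v + circLW v (T u) = circLW (T v) u + circLW u (T v)) →
      ∃ k : ℤ →₀ ℂ, ∀ j : ℤ, T (LV j) = k.sum fun c x => Finsupp.single (j + c) x)
    -- (b)
    ∧ (∀ P : (ℤ →₀ ℂ) →ₗ[ℂ] (ℤ →₀ ℂ),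
      (∀ u v : ℤ →₀ ℂ, P (circLW u v) = circLW (P u) v + circLW u (P v)) →
      (∀ u v : ℤ →₀ ℂ, circLW (P u) v = circLW (P v) u) →
      P = 0) := by
  constructor
  · intro T hT _
    refine ⟨T (LV 0), fun j => ?_⟩
    have h1 : circLW (LV 0) (LV j) = -(LV j) := circ_LV_zero_left _
    have h2 : T (LV j) = -circLW (T (LV 0)) (LV j) := by
      have := hT (LV 0) (LV j)
      rw [h1, map_neg] at this
      linear_combination (norm := module) -this
    rw [h2, circ_right, Finsupp.sum, Finsupp.sum, ← Finset.sum_neg_distrib]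
    refine Finset.sum_congr rfl fun i _ => ?_
    rw [Finsupp.single_neg, neg_neg, add_comm]
  · intro P hder hsym
    have key : ∀ i : ℤ, P (LV i) = 0 := by
      intro i
      have h1 : circLW (P (LV 0)) (LV i) = 0 := by
        have := hder (LV 0) (LV i)
        rw [circ_LV_zero_left, map_neg, circ_LV_zero_left (P (LV i))] at this
        exact add_eq_right.mp this.symm
      have h2 : circLW (P (LV i)) (LV 0) = 0 := by rw [hsym]; exact h1
      have := circ_LV_zero_right (P (LV i))
      rw [h2] at this
      simpa using this.symm
    refine LinearMap.ext fun u => ?_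
    rw [LinearMap.zero_apply, ← Finsupp.sum_single u, map_finsuppSum]
    refine Finset.sum_eq_zero fun i _ => ?_
    show P (Finsupp.single i (u i)) = 0
    have h3 : (Finsupp.single i (u i) : ℤ →₀ ℂ) = u i • LV i := by
      rw [LV, Finsupp.smul_single, smul_eq_mul, mul_one]
    rw [h3, map_smul, key, smul_zero]
end
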